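/- Let ρ > 0 and let Σ ∈ ℝ^{d×d} be symmetric positive definite. The supremum of Tr(S) over all symmetric positive semidefinite matrices S ∈ ℝ^{d×d} with B(S) ≤ ρ² equals (ρ + √(Tr Σ))², and it is attained at S⋆ = ((ρ + √(Tr Σ))² / Tr(Σ)) · Σ. -/

import Mathlib

open Matrix

-- `msqrt M` is the unique symmetric PSD square root of a symmetric PSD matrix `M` (else `0`).
open Classical in
noncomputable def msqrt {ι : Type*} [Fintype ι] [DecidableEq ι] (M : Matrix ι ι ℝ) : Matrix ι ι ℝ :=
  if h : M.PosSemidef then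
    h.1.eigenvectorUnitary.1 * diagonal ((↑) ∘ (√·) ∘ h.1.eigenvalues) *
      (star h.1.eigenvectorUnitary : Matrix ι ι ℝ)
  else 0

/-- `Bdist Sg S = Tr(S + Σ − 2(Σ^{1/2} S Σ^{1/2})^{1/2})`. -/
noncomputable def Bdist {ι : Type*} [Fintype ι] [DecidableEq ι] (Sg S : Matrix ι ι ℝ) : ℝ :=
  (S + Sg - (2:ℝ) • msqrt (msqrt Sg * S * msqrt Sg)).trace

/-!
Write `X = Σ^{1/2}` and `Y = S^{1/2}`. Then `Σ^{1/2} S Σ^{1/2} = (XY)(XY)ᵀ`, so the trace of its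
square root is the trace norm of `XY`, which Hölder's inequality bounds by
`‖X‖_F ‖Y‖_F = √(Tr Σ) √(Tr S)`. Hence `B(S) ≥ (√(Tr S) - √(Tr Σ))²`, and `B(S) ≤ ρ²` forces
`√(Tr S) ≤ ρ + √(Tr Σ)`. On the ray `S = c Σ` the square root is `√c Σ`, so
`B(c Σ) = (√c - 1)² Tr Σ`, which is exactly `ρ²` at `√c = (ρ + √(Tr Σ)) / √(Tr Σ)`.
-/

open scoped MatrixOrder

namespace Matrix

variable {ι : Type*} [Fintype ι] [DecidableEq ι]

theorem trace_transpose_mul_le {m n : Type*} [Fintype m] [Fintype n] (A B : Matrix m n ℝ) :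
    (Aᵀ * B).trace ≤ √(Aᵀ * A).trace * √(Bᵀ * B).trace := by
  simp_rw [← vec_dotProduct_vec, dotProduct, ← sq]
  exact Real.sum_mul_le_sqrt_mul_sqrt _ _ _

theorem transpose_cfcSqrt (A : Matrix ι ι ℝ) : (CFC.sqrt A)ᵀ = CFC.sqrt A := by
  rw [← conjTranspose_eq_transpose_of_trivial, ← star_eq_conjTranspose,
    (CFC.sqrt_nonneg A).isSelfAdjoint.star_eq]

/-- The Moore–Penrose inverse of `√M` for `M ≥ 0`: the junk value `0⁻¹ = 0` makes `(√x)⁻¹`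
vanish on the kernel. -/
noncomputable def pinvSqrt (M : Matrix ι ι ℝ) : Matrix ι ι ℝ := cfc (fun x : ℝ => (√x)⁻¹) M

theorem transpose_pinvSqrt (M : Matrix ι ι ℝ) : (pinvSqrt M)ᵀ = pinvSqrt M := by
  have := (cfc_predicate _ _ : IsSelfAdjoint (pinvSqrt M)).star_eq
  rwa [star_eq_conjTranspose, conjTranspose_eq_transpose_of_trivial] at this

theorem pinvSqrt_mul_self {M : Matrix ι ι ℝ} (hM : 0 ≤ M) : pinvSqrt M * M = CFC.sqrt M := by
  have hcont (f : ℝ → ℝ) : ContinuousOn f (spectrum ℝ M) := M.finite_spectrum.continuousOn f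
  rw [pinvSqrt, CFC.sqrt_eq_real_sqrt M, cfcₙ_eq_cfc]
  conv_lhs => arg 2; rw [← cfc_id' ℝ M]
  rw [← cfc_mul _ _ M (hcont _) (hcont _)]
  refine cfc_congr fun x _ => ?_
  rcases le_or_gt x 0 with hx | hx
  · simp [Real.sqrt_eq_zero'.2 hx]
  · rw [inv_mul_eq_div, Real.div_sqrt]

theorem pinvSqrt_mul_self_mul_pinvSqrt_le_one {M : Matrix ι ι ℝ} (hM : 0 ≤ M) :
    pinvSqrt M * M * pinvSqrt M ≤ 1 := by
  have hcont (f : ℝ → ℝ) : ContinuousOn f (spectrum ℝ M) := M.finite_spectrum.continuousOn f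
  rw [pinvSqrt_mul_self hM, CFC.sqrt_eq_real_sqrt M, cfcₙ_eq_cfc, pinvSqrt,
    ← cfc_mul _ _ M (hcont _) (hcont _)]
  refine cfc_le_one _ _ fun x _ => ?_
  rcases eq_or_ne (√x) 0 with hx | hx
  · simp [hx]
  · rw [mul_inv_cancel₀ hx]

/-- Hölder's inequality `‖XY‖₁ ≤ ‖X‖₂ ‖Y‖₂` for the trace norm and the Frobenius norm. -/
theorem trace_cfcSqrt_mul_transpose_le {m n k : Type*} [Fintype m] [DecidableEq m]
    [Fintype n] [Fintype k] (X : Matrix m n ℝ) (Y : Matrix n k ℝ) :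
    (CFC.sqrt (X * Y * (X * Y)ᵀ)).trace ≤ √(Xᵀ * X).trace * √(Yᵀ * Y).trace := by
  set M := X * Y * (X * Y)ᵀ with hM
  have hM0 : 0 ≤ M := by
    have := (posSemidef_self_mul_conjTranspose (X * Y)).nonneg
    rwa [conjTranspose_eq_transpose_of_trivial] at this
  obtain ⟨Q, hQt, hQM, hQMQ⟩ : ∃ Q : Matrix m m ℝ, Qᵀ = Q ∧ Q * M = CFC.sqrt M ∧ Q * M * Q ≤ 1 :=
    ⟨pinvSqrt M, transpose_pinvSqrt M, pinvSqrt_mul_self hM0,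
      pinvSqrt_mul_self_mul_pinvSqrt_le_one hM0⟩
  -- `Tr √M = ⟨Y, B⟩_F`, and `Q M Q ≤ 1` bounds `‖B‖_F` by `‖X‖_F`.
  set B := Xᵀ * Q * X * Y
  have htr : (CFC.sqrt M).trace = (Yᵀ * B).trace := by
    rw [← hQM, hM, trace_mul_comm Yᵀ]
    simp only [transpose_mul, ← Matrix.mul_assoc]
    rw [trace_mul_comm _ Xᵀ]
    simp only [B, Matrix.mul_assoc]
  have hB : (Bᵀ * B).trace ≤ (Xᵀ * X).trace := by
    have hBB : (Bᵀ * B).trace = (Xᵀ * (Q * M * Q) * X).trace := by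
      rw [trace_mul_comm]
      simp only [B, hM, transpose_mul, hQt, transpose_transpose, Matrix.mul_assoc]
    have hpsd := (sub_nonneg.2 hQMQ).posSemidef.conjTranspose_mul_mul_same X
    rw [conjTranspose_eq_transpose_of_trivial, Matrix.mul_sub, Matrix.sub_mul,
      Matrix.mul_one] at hpsd
    linarith [hpsd.trace_nonneg, trace_sub (Xᵀ * X) (Xᵀ * (Q * M * Q) * X)]
  calc (CFC.sqrt M).trace = (Yᵀ * B).trace := htr
    _ ≤ √(Yᵀ * Y).trace * √(Bᵀ * B).trace := trace_transpose_mul_le Y B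
    _ ≤ √(Yᵀ * Y).trace * √(Xᵀ * X).trace := by gcongr
    _ = _ := mul_comm _ _

end Matrix

section

variable {ι : Type*} [Fintype ι] [DecidableEq ι]

theorem msqrt_eq_cfcSqrt {M : Matrix ι ι ℝ}
    (hM : M.PosSemidef) : msqrt M = CFC.sqrt M := by
  rw [msqrt, dif_pos hM, CFC.sqrt_eq_cfc, cfc_nnreal_eq_real _ M hM.nonneg, hM.1.cfc_eq,
    IsHermitian.cfc, Unitary.conjStarAlgAut_apply]
  congr 3
  funext i
  simp [max_eq_left (hM.eigenvalues_nonneg i)]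

theorem Bdist_eq (Sg S : Matrix ι ι ℝ) :
    Bdist Sg S = S.trace + Sg.trace - 2 * (msqrt (msqrt Sg * S * msqrt Sg)).trace := by
  simp [Bdist, trace_sub, trace_add, trace_smul]

theorem trace_msqrt_conj_le {Sg S : Matrix ι ι ℝ} (hSg : Sg.PosSemidef) (hS : S.PosSemidef) :
    (msqrt (msqrt Sg * S * msqrt Sg)).trace ≤ √Sg.trace * √S.trace := by
  set X := CFC.sqrt Sg
  set Y := CFC.sqrt S
  have hXt : Xᵀ = X := transpose_cfcSqrt Sg
  have hYt : Yᵀ = Y := transpose_cfcSqrt S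
  have hXX : X * X = Sg := CFC.sqrt_mul_sqrt_self Sg hSg.nonneg
  have hYY : Y * Y = S := CFC.sqrt_mul_sqrt_self S hS.nonneg
  have hconj : X * S * X = X * Y * (X * Y)ᵀ := by
    rw [transpose_mul, hXt, hYt, ← hYY]
    simp only [Matrix.mul_assoc]
  have hpsd : (X * S * X).PosSemidef := by
    simpa [conjTranspose_eq_transpose_of_trivial, hXt] using hS.mul_mul_conjTranspose_same X
  rw [msqrt_eq_cfcSqrt hSg, msqrt_eq_cfcSqrt hpsd, hconj]
  exact (trace_cfcSqrt_mul_transpose_le X Y).trans_eq (by rw [hXt, hYt, hXX, hYY])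

theorem sq_sqrt_trace_sub_sqrt_trace_le_Bdist {Sg S : Matrix ι ι ℝ} (hSg : Sg.PosSemidef)
    (hS : S.PosSemidef) :
    (√S.trace - √Sg.trace) ^ 2 ≤ Bdist Sg S := by
  rw [Bdist_eq, sub_sq, Real.sq_sqrt hS.trace_nonneg, Real.sq_sqrt hSg.trace_nonneg]
  linarith [trace_msqrt_conj_le hSg hS]

theorem Bdist_smul_self {Sg : Matrix ι ι ℝ} (hSg : Sg.PosSemidef) {c : ℝ} (hc : 0 ≤ c) :
    Bdist Sg (c • Sg) = (√c - 1) ^ 2 * Sg.trace := by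
  have hXX : CFC.sqrt Sg * CFC.sqrt Sg = Sg := CFC.sqrt_mul_sqrt_self Sg hSg.nonneg
  have hnn : 0 ≤ √c • Sg := smul_nonneg (Real.sqrt_nonneg c) hSg.nonneg
  have hconj : CFC.sqrt Sg * (c • Sg) * CFC.sqrt Sg = (√c • Sg) * (√c • Sg) := by
    rw [smul_mul_smul_comm, Real.mul_self_sqrt hc, Matrix.mul_smul, Matrix.smul_mul]
    generalize CFC.sqrt Sg = X at hXX
    subst hXX
    simp only [Matrix.mul_assoc]
  have hsqrt : msqrt (msqrt Sg * (c • Sg) * msqrt Sg) = √c • Sg := by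
    have hpsd : ((√c • Sg) * (√c • Sg)).PosSemidef :=
      (hnn.isSelfAdjoint.mul_self_nonneg).posSemidef
    rw [msqrt_eq_cfcSqrt hSg, hconj, msqrt_eq_cfcSqrt hpsd, CFC.sqrt_mul_self _ hnn]
  rw [Bdist_eq, hsqrt, trace_smul, trace_smul, smul_eq_mul, smul_eq_mul]
  linear_combination (-Sg.trace) * Real.sq_sqrt hc

end

/-- The supremum of `Tr S` over symmetric PSD `S` with `B(S) ≤ ρ²` equals `(ρ + √(Tr Σ))²`,
attained at `S⋆ = ((ρ + √(Tr Σ))²/Tr Σ) Σ`. -/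
theorem stmt10 {d : ℕ} [NeZero d] (ρ : ℝ) (hρ : 0 < ρ) (Sg : Matrix (Fin d) (Fin d) ℝ)
    (hSg : Sg.PosDef) :
    IsGreatest { r : ℝ | ∃ S : Matrix (Fin d) (Fin d) ℝ, S.PosSemidef ∧ Bdist Sg S ≤ ρ ^ 2 ∧
        r = S.trace } ((ρ + Real.sqrt Sg.trace) ^ 2) ∧
      (((ρ + Real.sqrt Sg.trace) ^ 2 / Sg.trace) • Sg).PosSemidef ∧
      Bdist Sg (((ρ + Real.sqrt Sg.trace) ^ 2 / Sg.trace) • Sg) ≤ ρ ^ 2 ∧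
      (((ρ + Real.sqrt Sg.trace) ^ 2 / Sg.trace) • Sg).trace = (ρ + Real.sqrt Sg.trace) ^ 2 := by
  have hT : 0 < Sg.trace := hSg.trace_pos
  set s := √Sg.trace
  have hs : 0 < s := Real.sqrt_pos.2 hT
  set c := (ρ + s) ^ 2 / Sg.trace
  have hc : 0 ≤ c := by positivity
  have hpsd : (c • Sg).PosSemidef := hSg.posSemidef.smul hc
  have hB : Bdist Sg (c • Sg) = ρ ^ 2 := by
    rw [Bdist_smul_self hSg.posSemidef hc, Real.sqrt_div' _ hT.le, Real.sqrt_sq (by positivity),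
      div_sub_one hs.ne', add_sub_cancel_right, div_pow, Real.sq_sqrt hT.le,
      div_mul_cancel₀ _ hT.ne']
  have htr : (c • Sg).trace = (ρ + s) ^ 2 := by
    rw [trace_smul, smul_eq_mul, div_mul_cancel₀ _ hT.ne']
  refine ⟨⟨⟨c • Sg, hpsd, hB.le, htr.symm⟩, ?_⟩, hpsd, hB.le, htr⟩
  rintro _ ⟨S, hS, hBS, rfl⟩
  have hsq := (sq_sqrt_trace_sub_sqrt_trace_le_Bdist hSg.posSemidef hS).trans hBS
  have hsqrt : √S.trace ≤ ρ + s := by linarith [(abs_le_of_sq_le_sq' hsq hρ.le).2]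
  calc S.trace = √S.trace ^ 2 := (Real.sq_sqrt hS.trace_nonneg).symm
    _ ≤ (ρ + s) ^ 2 := by gcongr
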